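/- Let CC be a C-system and let CC', CC'' be two C-subsystems of CC such that Õb(CC') = Õb(CC'') as subsets of Õb(CC). Then Ob(CC') = Ob(CC''), and consequently CC' = CC''. -/
import Mathlib


universe u v

/-- A pre-category: sets of objects and morphisms with source, target, identity
and an (everywhere-defined but only meaningful on composable pairs) composition,
written in diagrammatic order: `comp f g` is `f ∘ g` for `f : X → Y`, `g : Y → Z`. -/
structure PreCat (Ob : Type u) (Mor : Type v) where
  dom : Mor → Ob
  cod : Mor → Ob
  id : Ob → Mor
  comp : Mor → Mor → Mor
  id_dom : ∀ X, dom (id X) = X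
  id_cod : ∀ X, cod (id X) = X
  dom_comp : ∀ f g, cod f = dom g → dom (comp f g) = dom f
  cod_comp : ∀ f g, cod f = dom g → cod (comp f g) = cod g
  id_comp : ∀ f, comp (id (dom f)) f = f
  comp_id : ∀ f, comp f (id (cod f)) = f
  comp_assoc : ∀ f g h, cod f = dom g → cod g = dom h →
    comp (comp f g) h = comp f (comp g h)

/-- A C0-system (Definition 2014.07.06.def3). -/
structure C0 (Ob : Type u) (Mor : Type v) extends PreCat Ob Mor where
  l : Ob → ℕ
  pt : Ob
  ft : Ob → Ob
  p : Ob → Mor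
  p_dom : ∀ X, dom (p X) = X
  p_cod : ∀ X, cod (p X) = ft X
  /-- `star X f` is `f*X`, meaningful for `0 < l X` and `cod f = ft X`. -/
  star : Ob → Mor → Ob
  /-- `q X f` is `q(f,X) : f*X → X`, meaningful for `0 < l X` and `cod f = ft X`. -/
  q : Ob → Mor → Mor
  l_pt : l pt = 0
  eq_pt : ∀ X, l X = 0 → X = pt
  l_ft : ∀ X, 0 < l X → l (ft X) = l X - 1
  ft_pt : ft pt = pt
  pt_final : ∀ Y, ∃! f, dom f = Y ∧ cod f = pt
  l_star : ∀ X f, 0 < l X → cod f = ft X → 0 < l (star X f)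
  ft_star : ∀ X f, 0 < l X → cod f = ft X → ft (star X f) = dom f
  q_dom : ∀ X f, 0 < l X → cod f = ft X → dom (q X f) = star X f
  q_cod : ∀ X f, 0 < l X → cod f = ft X → cod (q X f) = X
  square_comm : ∀ X f, 0 < l X → cod f = ft X →
    comp (p (star X f)) f = comp (q X f) (p X)
  star_id : ∀ X, 0 < l X → star X (id (ft X)) = X
  q_id : ∀ X, 0 < l X → q X (id (ft X)) = id X
  star_comp : ∀ X f g, 0 < l X → cod f = ft X → cod g = dom f →
    star X (comp g f) = star (star X f) g
  q_comp : ∀ X f g, 0 < l X → cod f = ft X → cod g = dom f →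
    q X (comp g f) = comp (q (star X f) g) (q X f)

/-- `ft(f) = f ∘ p_X` for `f : Y → X`. -/
def C0.ftMor {Ob : Type u} {Mor : Type v} (C : C0 Ob Mor) (f : Mor) : Mor :=
  C.comp f (C.p (C.cod f))

/-- The axioms of the operation `f ↦ s_f` of a C-system (Definition 2014.07.06.def1),
for `f : Y → X` with `0 < l X`. -/
def C0.IsSOp {Ob : Type u} {Mor : Type v} (C : C0 Ob Mor) (s : Mor → Mor) : Prop :=
  (∀ f, 0 < C.l (C.cod f) → C.dom (s f) = C.dom f) ∧
  (∀ f, 0 < C.l (C.cod f) → C.cod (s f) = C.star (C.cod f) (C.ftMor f)) ∧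
  (∀ f, 0 < C.l (C.cod f) →
    C.comp (s f) (C.p (C.star (C.cod f) (C.ftMor f))) = C.id (C.dom f)) ∧
  (∀ f, 0 < C.l (C.cod f) → C.comp (s f) (C.q (C.cod f) (C.ftMor f)) = f) ∧
  (∀ f U g, 0 < C.l U → C.cod g = C.ft U → 0 < C.l (C.cod f) → C.cod f = C.star U g →
    s f = s (C.comp f (C.q U g)))

/-- A C-system: a C0-system together with an operation `f ↦ s_f` satisfying the axioms. -/
structure CSys (Ob : Type u) (Mor : Type v) extends C0 Ob Mor where
  sOp : Mor → Mor
  sOp_spec : C0.IsSOp toC0 sOp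

def CSys.ftMor {Ob : Type u} {Mor : Type v} (C : CSys Ob Mor) (f : Mor) : Mor :=
  C.comp f (C.p (C.cod f))

/-- `Õb(CC)`: the set of sections `s : ft X → X` of the canonical projections `p_X`,
for `l X > 0`. -/
def CSys.tOb {Ob : Type u} {Mor : Type v} (C : CSys Ob Mor) : Set Mor :=
  {s | 0 < C.l (C.cod s) ∧ C.dom s = C.ft (C.cod s) ∧
    C.comp s (C.p (C.cod s)) = C.id (C.ft (C.cod s))}

/-- Iterated canonical projection `p_{X,i} : X → ft^i X` (meaningful for `i ≤ l X`). -/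
def CSys.pIter {Ob : Type u} {Mor : Type v} (C : CSys Ob Mor) (X : Ob) : ℕ → Mor
  | 0 => C.id X
  | i + 1 => C.comp (CSys.pIter C X i) (C.p (C.ft^[i] X))

/-- Iterated pull-back morphism `q(f,X,i) : f*(X,i) → X` for `f : Y → ft^i X`. -/
def CSys.qIter {Ob : Type u} {Mor : Type v} (C : CSys Ob Mor) (f : Mor) : Ob → ℕ → Mor
  | _, 0 => f
  | X, i + 1 => C.q X (CSys.qIter C f (C.ft X) i)

/-- Iterated pull-back object `f*(X,i)` for `f : Y → ft^i X`. -/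
def CSys.starIter {Ob : Type u} {Mor : Type v} (C : CSys Ob Mor) (f : Mor) : Ob → ℕ → Ob
  | _, 0 => C.dom f
  | X, i + 1 => C.star X (CSys.qIter C f (C.ft X) i)

/-- Pull-back `f*(r,i) : f*(ft X, i-1) → f*(X,i)` of a section `r : ft X → X` along
`q(f, ft X, i-1)` (for `i ≥ 1`); it equals `s` applied to `q(f,ft X,i-1) ∘ r`. -/
def CSys.sectStar {Ob : Type u} {Mor : Type v} (C : CSys Ob Mor)
    (f : Mor) (X : Ob) (r : Mor) (i : ℕ) : Mor :=
  C.sOp (C.comp (C.qIter f (C.ft X) (i - 1)) r)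

/-- The diagonal `δ(X) = s_{Id_X} : X → p_X^*(X)`. -/
def CSys.delta {Ob : Type u} {Mor : Type v} (C : CSys Ob Mor) (X : Ob) : Mor :=
  C.sOp (C.id X)

/-- A C-subsystem: a sub-pre-category closed under the operations defining the
C-system structure. -/
structure Subsystem {Ob : Type u} {Mor : Type v} (C : CSys Ob Mor) where
  obs : Set Ob
  mors : Set Mor
  dom_mem : ∀ f ∈ mors, C.dom f ∈ obs
  cod_mem : ∀ f ∈ mors, C.cod f ∈ obs
  id_mem : ∀ X ∈ obs, C.id X ∈ mors
  comp_mem : ∀ f ∈ mors, ∀ g ∈ mors, C.cod f = C.dom g → C.comp f g ∈ mors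
  pt_mem : C.pt ∈ obs
  ft_mem : ∀ X ∈ obs, C.ft X ∈ obs
  p_mem : ∀ X ∈ obs, C.p X ∈ mors
  star_mem : ∀ X ∈ obs, ∀ f ∈ mors, 0 < C.l X → C.cod f = C.ft X → C.star X f ∈ obs
  q_mem : ∀ X ∈ obs, ∀ f ∈ mors, 0 < C.l X → C.cod f = C.ft X → C.q X f ∈ mors
  s_mem : ∀ f ∈ mors, 0 < C.l (C.cod f) → C.sOp f ∈ mors

/-- The closure conditions (1)-(6) of Proposition 2009.10.15.prop2 on a pair of subsets
`B ⊆ Ob(CC)`, `B̃ ⊆ Õb(CC)`. -/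
def CSys.Closed {Ob : Type u} {Mor : Type v} (C : CSys Ob Mor)
    (B : Set Ob) (Bt : Set Mor) : Prop :=
  C.pt ∈ B ∧
  (∀ X ∈ B, C.ft X ∈ B) ∧
  (∀ s ∈ Bt, C.cod s ∈ B) ∧
  (∀ Y ∈ B, ∀ r ∈ Bt, 0 < C.l Y → ∀ i : ℕ, 1 ≤ i → i ≤ C.l (C.cod r) →
    C.ft Y = C.ft^[i] (C.cod r) → C.sectStar (C.p Y) (C.cod r) r i ∈ Bt) ∧
  (∀ s ∈ Bt, ∀ r ∈ Bt, ∀ i : ℕ, 1 ≤ i →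
    C.cod s = C.ft^[i] (C.cod r) → C.sectStar s (C.cod r) r i ∈ Bt) ∧
  (∀ X ∈ B, 0 < C.l X → C.delta X ∈ Bt)

/-- The inductively defined set of morphisms `Mor(CC')` determined by a pair `(B,B̃)`:
`f : Y → pt` belongs iff `Y ∈ B`; `f : Y → X` with `l X > 0` belongs iff `X ∈ B`,
`ft(f)` belongs and `s_f ∈ B̃`. -/
inductive MorIn {Ob : Type u} {Mor : Type v} (C : CSys Ob Mor)
    (B : Set Ob) (Bt : Set Mor) : Mor → Prop
  | base (f : Mor) : C.cod f = C.pt → C.dom f ∈ B → MorIn C B Bt f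
  | step (f : Mor) : 0 < C.l (C.cod f) → C.cod f ∈ B →
      MorIn C B Bt (C.ftMor f) → C.sOp f ∈ Bt → MorIn C B Bt f

/-- A regular congruence relation on a C-system (Definition 2014.07.04.def1). -/
structure RegCong {Ob : Type u} {Mor : Type v} (C : CSys Ob Mor) where
  rOb : Ob → Ob → Prop
  rMor : Mor → Mor → Prop
  eqv_ob : Equivalence rOb
  eqv_mor : Equivalence rMor
  dom_compat : ∀ f g, rMor f g → rOb (C.dom f) (C.dom g)
  cod_compat : ∀ f g, rMor f g → rOb (C.cod f) (C.cod g)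
  id_compat : ∀ X Y, rOb X Y → rMor (C.id X) (C.id Y)
  ft_compat : ∀ X Y, rOb X Y → rOb (C.ft X) (C.ft Y)
  p_compat : ∀ X Y, rOb X Y → rMor (C.p X) (C.p Y)
  comp_compat : ∀ f f' g g', C.cod f = C.dom g → C.cod f' = C.dom g' →
    rMor f f' → rMor g g' → rMor (C.comp f g) (C.comp f' g')
  star_compat : ∀ X X' f f', 0 < C.l X → 0 < C.l X' →
    C.cod f = C.ft X → C.cod f' = C.ft X' →
    rOb X X' → rMor f f' → rOb (C.star X f) (C.star X' f')
  q_compat : ∀ X X' f f', 0 < C.l X → 0 < C.l X' →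
    C.cod f = C.ft X → C.cod f' = C.ft X' →
    rOb X X' → rMor f f' → rMor (C.q X f) (C.q X' f')
  s_compat : ∀ f f', 0 < C.l (C.cod f) → 0 < C.l (C.cod f') →
    rMor f f' → rMor (C.sOp f) (C.sOp f')
  l_compat : ∀ X Y, rOb X Y → C.l X = C.l Y
  ob_lift : ∀ X F, 0 < C.l X → rOb (C.ft X) F → ∃ XF, rOb X XF ∧ C.ft XF = F
  mor_lift : ∀ f X' Y', rOb X' (C.dom f) → rOb Y' (C.cod f) →
    ∃ f', C.dom f' = X' ∧ C.cod f' = Y' ∧ rMor f' f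

/-- A homomorphism of C-systems, given by a pair of maps on objects and morphisms. -/
structure IsHom {Ob₁ : Type u} {Mor₁ : Type v} {Ob₂ : Type u} {Mor₂ : Type v}
    (C : CSys Ob₁ Mor₁) (D : CSys Ob₂ Mor₂) (F : Ob₁ → Ob₂) (G : Mor₁ → Mor₂) : Prop where
  dom_map : ∀ f, D.dom (G f) = F (C.dom f)
  cod_map : ∀ f, D.cod (G f) = F (C.cod f)
  id_map : ∀ X, G (C.id X) = D.id (F X)
  comp_map : ∀ f g, C.cod f = C.dom g → G (C.comp f g) = D.comp (G f) (G g)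
  l_map : ∀ X, D.l (F X) = C.l X
  pt_map : F C.pt = D.pt
  ft_map : ∀ X, F (C.ft X) = D.ft (F X)
  p_map : ∀ X, G (C.p X) = D.p (F X)
  star_map : ∀ X f, 0 < C.l X → C.cod f = C.ft X → F (C.star X f) = D.star (F X) (G f)
  q_map : ∀ X f, 0 < C.l X → C.cod f = C.ft X → G (C.q X f) = D.q (F X) (G f)
  s_map : ∀ f, 0 < C.l (C.cod f) → G (C.sOp f) = D.sOp (G f)

/-- A pair of equivalence relations `(∼, ≃)` on `(Ob(CC), Õb(CC))` satisfying the
conditions (1)-(4) of Proposition 2014.07.08.prop1.  The relation `≃` is encoded as a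
relation on morphisms supported on `Õb(CC)`. -/
structure TPair {Ob : Type u} {Mor : Type v} (C : CSys Ob Mor) where
  rOb : Ob → Ob → Prop
  rT : Mor → Mor → Prop
  eqv_ob : Equivalence rOb
  rT_supp : ∀ s r, rT s r → s ∈ C.tOb ∧ r ∈ C.tOb
  rT_refl : ∀ s ∈ C.tOb, rT s s
  rT_symm : ∀ s r, rT s r → rT r s
  rT_trans : ∀ s r t, rT s r → rT r t → rT s t
  ft_compat : ∀ X Y, rOb X Y → rOb (C.ft X) (C.ft Y)
  bd_compat : ∀ s r, rT s r → rOb (C.cod s) (C.cod r)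
  T_compat : ∀ Y Y' X X' (i : ℕ), 1 ≤ i → i ≤ C.l X → i ≤ C.l X' →
    0 < C.l Y → 0 < C.l Y' → C.ft Y = C.ft^[i] X → C.ft Y' = C.ft^[i] X' →
    rOb Y Y' → rOb X X' →
    rOb (C.starIter (C.p Y) X i) (C.starIter (C.p Y') X' i)
  Tt_compat : ∀ Y Y' r r' (i : ℕ), 1 ≤ i → i ≤ C.l (C.cod r) → i ≤ C.l (C.cod r') →
    0 < C.l Y → 0 < C.l Y' → C.ft Y = C.ft^[i] (C.cod r) → C.ft Y' = C.ft^[i] (C.cod r') →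
    rOb Y Y' → rT r r' →
    rT (C.sectStar (C.p Y) (C.cod r) r i) (C.sectStar (C.p Y') (C.cod r') r' i)
  S_compat : ∀ s s' X X' (i : ℕ), 1 ≤ i → s ∈ C.tOb → s' ∈ C.tOb →
    C.cod s = C.ft^[i] X → C.cod s' = C.ft^[i] X' → rT s s' → rOb X X' →
    rOb (C.starIter s X i) (C.starIter s' X' i)
  St_compat : ∀ s s' r r' (i : ℕ), 1 ≤ i →
    C.cod s = C.ft^[i] (C.cod r) → C.cod s' = C.ft^[i] (C.cod r') →
    rT s s' → rT r r' →
    rT (C.sectStar s (C.cod r) r i) (C.sectStar s' (C.cod r') r' i)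
  delta_compat : ∀ X X', 0 < C.l X → 0 < C.l X' → rOb X X' →
    rT (C.delta X) (C.delta X')
  l_compat : ∀ X Y, rOb X Y → C.l X = C.l Y
  ob_lift : ∀ X F, 0 < C.l X → rOb (C.ft X) F → ∃ XF, rOb X XF ∧ C.ft XF = F
  sec_lift : ∀ s X', s ∈ C.tOb → rOb X' (C.cod s) →
    ∃ s', s' ∈ C.tOb ∧ C.cod s' = X' ∧ rT s' s

/-- The relation `∼_Mor` on morphisms with codomain of length `m`, defined by induction
on `m` from a pair `(∼, ≃)`:  for `m = 0`, `(X₁ → pt) ∼ (X₂ → pt)` iff `X₁ ∼ X₂`;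
for `m+1`, `f₁ ∼ f₂` iff `ft(f₁) ∼ ft(f₂)` and `s_{f₁} ≃ s_{f₂}`. -/
def CSys.relMorN {Ob : Type u} {Mor : Type v} (C : CSys Ob Mor) (P : TPair C) :
    ℕ → Mor → Mor → Prop
  | 0, f₁, f₂ => C.cod f₁ = C.pt ∧ C.cod f₂ = C.pt ∧ P.rOb (C.dom f₁) (C.dom f₂)
  | m + 1, f₁, f₂ => C.l (C.cod f₁) = m + 1 ∧ C.l (C.cod f₂) = m + 1 ∧
      CSys.relMorN C P m (C.ftMor f₁) (C.ftMor f₂) ∧ P.rT (C.sOp f₁) (C.sOp f₂)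

def CSys.relMor {Ob : Type u} {Mor : Type v} (C : CSys Ob Mor) (P : TPair C)
    (f₁ f₂ : Mor) : Prop :=
  CSys.relMorN C P (C.l (C.cod f₁)) f₁ f₂

section Stmt5Aux

variable {Ob : Type u} {Mor : Type v} (C : CSys Ob Mor)

lemma cod_ftMor' (f : Mor) : C.cod (C.ftMor f) = C.ft (C.cod f) := by
  unfold CSys.ftMor
  rw [C.cod_comp f (C.p (C.cod f)) (by rw [C.p_dom]), C.p_cod]

lemma dom_ftMor' (f : Mor) : C.dom (C.ftMor f) = C.dom f := by
  unfold CSys.ftMor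
  rw [C.dom_comp f (C.p (C.cod f)) (by rw [C.p_dom])]

lemma sOp_dom (f : Mor) (h : 0 < C.l (C.cod f)) : C.dom (C.sOp f) = C.dom f :=
  C.sOp_spec.1 f h

lemma sOp_cod (f : Mor) (h : 0 < C.l (C.cod f)) :
    C.cod (C.sOp f) = C.star (C.cod f) (C.ftMor f) :=
  C.sOp_spec.2.1 f h

lemma sOp_sect (f : Mor) (h : 0 < C.l (C.cod f)) :
    C.comp (C.sOp f) (C.p (C.star (C.cod f) (C.ftMor f))) = C.id (C.dom f) :=
  C.sOp_spec.2.2.1 f h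

lemma sOp_q (f : Mor) (h : 0 < C.l (C.cod f)) :
    C.comp (C.sOp f) (C.q (C.cod f) (C.ftMor f)) = f :=
  C.sOp_spec.2.2.2.1 f h

lemma sOp_tOb (f : Mor) (h : 0 < C.l (C.cod f)) : C.sOp f ∈ C.tOb := by
  have hc : C.cod (C.ftMor f) = C.ft (C.cod f) := cod_ftMor' C f
  have hcod := sOp_cod C f h
  have hft : C.ft (C.cod (C.sOp f)) = C.dom f := by
    rw [hcod, C.ft_star _ _ h hc, dom_ftMor' C f]
  refine ⟨?_, ?_, ?_⟩
  · rw [hcod]; exact C.l_star _ _ h hc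
  · rw [hft, sOp_dom C f h]
  · rw [hft]
    have := sOp_sect C f h
    rw [hcod]
    exact this

/-- Every morphism to `pt` from an object of a subsystem is in the subsystem. -/
lemma to_pt_mem (S : Subsystem C) : ∀ (n : ℕ) (Y : Ob), C.l Y = n → Y ∈ S.obs →
    ∀ f, C.dom f = Y → C.cod f = C.pt → f ∈ S.mors := by
  intro n
  induction n with
  | zero =>
    intro Y hl hY f hd hc
    have hYpt : Y = C.pt := C.eq_pt Y hl
    obtain ⟨u, _, huniq⟩ := C.pt_final Y
    have h1 : f = u := (huniq f ⟨hd, hc⟩).symm ▸ rfl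
    have h2 : C.id Y = u := by
      apply huniq
      exact ⟨C.id_dom Y, by rw [C.id_cod, hYpt]⟩
    have : f = C.id Y := by rw [huniq f ⟨hd, hc⟩, ← h2]
    rw [this]
    exact S.id_mem Y hY
  | succ n ih =>
    intro Y hl hY f hd hc
    have hpos : 0 < C.l Y := by omega
    have hftl : C.l (C.ft Y) = n := by rw [C.l_ft Y hpos]; omega
    obtain ⟨g, ⟨hgd, hgc⟩, _⟩ := C.pt_final (C.ft Y)
    have hg : g ∈ S.mors := ih (C.ft Y) hftl (S.ft_mem Y hY) g hgd hgc
    have hcomp : C.comp (C.p Y) g ∈ S.mors := by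
      apply S.comp_mem _ (S.p_mem Y hY) _ hg
      rw [C.p_cod, hgd]
    obtain ⟨u, _, huniq⟩ := C.pt_final Y
    have h1 : f = u := huniq f ⟨hd, hc⟩
    have h2 : C.comp (C.p Y) g = u := by
      apply huniq
      constructor
      · rw [C.dom_comp _ _ (by rw [C.p_cod, hgd]), C.p_dom]
      · rw [C.cod_comp _ _ (by rw [C.p_cod, hgd]), hgc]
    rw [h1, ← h2]
    exact hcomp

/-- One inclusion on objects. -/
lemma obs_sub (S₁ S₂ : Subsystem C)
    (hT : S₁.mors ∩ C.tOb ⊆ S₂.mors ∩ C.tOb) : S₁.obs ⊆ S₂.obs := by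
  intro X hX
  by_cases hl : 0 < C.l X
  · -- use the diagonal δ(X)
    have hid : C.id X ∈ S₁.mors := S₁.id_mem X hX
    have hcid : C.cod (C.id X) = X := C.id_cod X
    have hpos : 0 < C.l (C.cod (C.id X)) := by rw [hcid]; exact hl
    have hs1 : C.sOp (C.id X) ∈ S₁.mors := S₁.s_mem _ hid hpos
    have hst : C.sOp (C.id X) ∈ C.tOb := sOp_tOb C _ hpos
    have hs2 : C.sOp (C.id X) ∈ S₂.mors := (hT ⟨hs1, hst⟩).1
    have hcodmem : C.cod (C.sOp (C.id X)) ∈ S₂.obs := S₂.cod_mem _ hs2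
    have hftmem : C.ft (C.cod (C.sOp (C.id X))) ∈ S₂.obs :=
      S₂.ft_mem _ hcodmem
    have hfteq : C.ft (C.cod (C.sOp (C.id X))) = X := by
      rw [sOp_cod C _ hpos, C.ft_star _ _ hpos (cod_ftMor' C _),
        dom_ftMor' C _, C.id_dom]
    rwa [hfteq] at hftmem
  · have : X = C.pt := C.eq_pt X (by omega)
    rw [this]; exact S₂.pt_mem

/-- One inclusion on morphisms. -/
lemma mors_sub (S₁ S₂ : Subsystem C)
    (hobs : S₁.obs ⊆ S₂.obs)
    (hT : S₁.mors ∩ C.tOb ⊆ S₂.mors ∩ C.tOb) : S₁.mors ⊆ S₂.mors := by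
  suffices H : ∀ (n : ℕ) (f : Mor), C.l (C.cod f) = n → f ∈ S₁.mors → f ∈ S₂.mors by
    intro f hf; exact H (C.l (C.cod f)) f rfl hf
  intro n
  induction n with
  | zero =>
    intro f hl hf
    have hc : C.cod f = C.pt := C.eq_pt _ hl
    exact to_pt_mem C S₂ (C.l (C.dom f)) (C.dom f) rfl
      (hobs (S₁.dom_mem f hf)) f rfl hc
  | succ n ih =>
    intro f hl hf
    have hpos : 0 < C.l (C.cod f) := by omega
    have hX1 : C.cod f ∈ S₁.obs := S₁.cod_mem f hf
    have hX2 : C.cod f ∈ S₂.obs := hobs hX1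
    have hft1 : C.ftMor f ∈ S₁.mors :=
      S₁.comp_mem f hf _ (S₁.p_mem _ hX1) (by rw [C.p_dom])
    have hftl : C.l (C.cod (C.ftMor f)) = n := by
      rw [cod_ftMor' C f, C.l_ft _ hpos]; omega
    have hft2 : C.ftMor f ∈ S₂.mors := ih _ hftl hft1
    have hs1 : C.sOp f ∈ S₁.mors := S₁.s_mem f hf hpos
    have hs2 : C.sOp f ∈ S₂.mors := (hT ⟨hs1, sOp_tOb C f hpos⟩).1
    have hq2 : C.q (C.cod f) (C.ftMor f) ∈ S₂.mors :=
      S₂.q_mem _ hX2 _ hft2 hpos (cod_ftMor' C f)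
    have hcomp : C.comp (C.sOp f) (C.q (C.cod f) (C.ftMor f)) ∈ S₂.mors := by
      apply S₂.comp_mem _ hs2 _ hq2
      rw [sOp_cod C f hpos, C.q_dom _ _ hpos (cod_ftMor' C f)]
    rwa [sOp_q C f hpos] at hcomp

end Stmt5Aux

/-- for two C-subsystems it suffices that `Õb(CC') = Õb(CC'')`:
then also `Ob(CC') = Ob(CC'')` and consequently `CC' = CC''`. -/
theorem stmt5 {Ob : Type u} {Mor : Type v} (C : CSys Ob Mor) (S₁ S₂ : Subsystem C)
    (hT : S₁.mors ∩ C.tOb = S₂.mors ∩ C.tOb) :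
    S₁.obs = S₂.obs ∧ S₁ = S₂ := by
  have hT₁ : S₁.mors ∩ C.tOb ⊆ S₂.mors ∩ C.tOb := hT.le
  have hT₂ : S₂.mors ∩ C.tOb ⊆ S₁.mors ∩ C.tOb := hT.ge
  have hobs : S₁.obs = S₂.obs :=
    le_antisymm (obs_sub C S₁ S₂ hT₁) (obs_sub C S₂ S₁ hT₂)
  have hmors : S₁.mors = S₂.mors :=
    le_antisymm (mors_sub C S₁ S₂ hobs.le hT₁) (mors_sub C S₂ S₁ hobs.ge hT₂)
  refine ⟨hobs, ?_⟩
  cases S₁; cases S₂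
  simp only at hobs hmors
  subst hobs hmors
  rfl
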